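/- For a compound geometrically uniform ensemble generated by an irreducible representation of a finite group G of order n on a d-dimensional Hilbert space with generator states ρ_1,…,ρ_m (states ρ_{g,k} = g ρ_k g†, each with prior 1/(mn)), the optimal discrimination success probability equals (d/(m·n))·max_{1≤k≤m} λ_max(ρ_k). -/

import Mathlib

open scoped ComplexOrder

/-- Optimal success probability of discriminating the ensemble `(p i, ρ i)` by a POVM. -/
noncomputable def optSucc {ι H : Type*} [Fintype ι] [Fintype H] [DecidableEq H]
    (p : ι → ℝ) (ρ : ι → Matrix H H ℂ) : ℝ :=
  sSup {x : ℝ | ∃ M : ι → Matrix H H ℂ,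
    (∀ i, (M i).PosSemidef) ∧ (∑ i, M i) = 1 ∧ x = ∑ i, p i * ((M i * ρ i).trace).re}

open Matrix

section Aux
variable {n : Type*} [Fintype n] [DecidableEq n]

lemma psd_trace_nonneg {A : Matrix n n ℂ} (hA : A.PosSemidef) : 0 ≤ A.trace := by
  rw [Matrix.trace]
  refine Finset.sum_nonneg fun i _ => ?_
  have := hA.dotProduct_mulVec_nonneg (Pi.single i 1)
  simpa [dotProduct, Matrix.mulVec, Pi.single_apply, Matrix.diag] using this

open scoped MatrixOrder in
lemma psd_trace_mul_nonneg {A B : Matrix n n ℂ} (hA : A.PosSemidef) (hB : B.PosSemidef) :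
    0 ≤ (A * B).trace := by
  have hs : (CFC.sqrt A).PosSemidef := (CFC.sqrt_nonneg A).posSemidef
  have h1 : A = CFC.sqrt A * CFC.sqrt A := (CFC.sqrt_mul_sqrt_self A hA.nonneg).symm
  have h2 : (A * B).trace = (CFC.sqrt A * B * CFC.sqrt A).trace := by
    conv_lhs => rw [h1]
    rw [mul_assoc, Matrix.trace_mul_comm]
  rw [h2]
  have := hB.mul_mul_conjTranspose_same (CFC.sqrt A)
  rw [hs.1] at this
  exact psd_trace_nonneg this

lemma psd_smul_real {c : ℝ} (hc : 0 ≤ c) {A : Matrix n n ℂ} (hA : A.PosSemidef) :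
    ((c : ℂ) • A).PosSemidef := by
  refine Matrix.PosSemidef.of_dotProduct_mulVec_nonneg ?_ ?_
  · unfold Matrix.IsHermitian
    rw [Matrix.conjTranspose_smul, hA.1, Complex.star_def, Complex.conj_ofReal]
  · intro x
    rw [Matrix.smul_mulVec, dotProduct_smul, smul_eq_mul]
    exact mul_nonneg (by exact_mod_cast hc) (hA.dotProduct_mulVec_nonneg x)

lemma vecMulVec_mul_trace (v w : n → ℂ) (B : Matrix n n ℂ) :
    (Matrix.vecMulVec v w * B).trace = w ⬝ᵥ (B *ᵥ v) := by
  simp only [Matrix.trace, Matrix.diag, Matrix.mul_apply, Matrix.vecMulVec_apply,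
    dotProduct, Matrix.mulVec, Finset.mul_sum]
  rw [Finset.sum_comm]
  congr 1; funext j
  congr 1; funext i
  ring

lemma vecMulVec_posSemidef (v : n → ℂ) : (Matrix.vecMulVec v (star v)).PosSemidef := by
  refine Matrix.PosSemidef.of_dotProduct_mulVec_nonneg ?_ ?_
  · unfold Matrix.IsHermitian
    ext i j
    simp [Matrix.conjTranspose_apply, Matrix.vecMulVec_apply, mul_comm]
  · intro x
    have hmv : Matrix.vecMulVec v (star v) *ᵥ x = (star v ⬝ᵥ x) • v := by
      funext i
      simp only [Matrix.mulVec, Matrix.vecMulVec_apply, dotProduct, Pi.smul_apply,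
        smul_eq_mul, Finset.sum_mul]
      exact Finset.sum_congr rfl fun j _ => by ring
    rw [hmv, dotProduct_smul, smul_eq_mul]
    have hsx : star x ⬝ᵥ v = star (star v ⬝ᵥ x) := by
      rw [Matrix.star_dotProduct]
    rw [hsx]
    exact mul_star_self_nonneg _

lemma smul_one_sub_psd {A : Matrix n n ℂ} (hA : A.PosSemidef)
    {lam : ℝ} (hlam : ∀ i, hA.1.eigenvalues i ≤ lam) :
    ((lam : ℂ) • 1 - A).PosSemidef := by
  set U : Matrix n n ℂ := (hA.1.eigenvectorUnitary : Matrix n n ℂ) with hU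
  have hUU : U * star U = 1 := (Matrix.mem_unitaryGroup_iff).mp hA.1.eigenvectorUnitary.2
  have key : (lam : ℂ) • 1 - A
      = U * Matrix.diagonal (fun i => ((lam - hA.1.eigenvalues i : ℝ) : ℂ)) * star U := by
    have hdiag : Matrix.diagonal (fun i => ((lam - hA.1.eigenvalues i : ℝ) : ℂ))
        = (lam : ℂ) • 1 - Matrix.diagonal (RCLike.ofReal ∘ hA.1.eigenvalues) := by
      ext i j
      by_cases h : i = j <;>
        simp [Matrix.diagonal_apply, h, Matrix.sub_apply, Matrix.smul_apply, Matrix.one_apply,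
          Complex.ofReal_sub]
    rw [hdiag, Matrix.mul_sub, Matrix.sub_mul, Matrix.mul_smul, Matrix.smul_mul, mul_one, hUU]
    exact congrArg (fun X => (lam : ℂ) • 1 - X) hA.1.spectral_theorem
  rw [key]
  have hd : (Matrix.diagonal (fun i => ((lam - hA.1.eigenvalues i : ℝ) : ℂ))).PosSemidef := by
    rw [Matrix.posSemidef_diagonal_iff]
    intro i
    have := hlam i
    exact Complex.zero_le_real.2 (by linarith)
  have := hd.mul_mul_conjTranspose_same U
  rwa [← Matrix.star_eq_conjTranspose] at this

lemma re_trace_mul_le {M A : Matrix n n ℂ} (hM : M.PosSemidef) {lam : ℝ}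
    (h : ((lam : ℂ) • 1 - A).PosSemidef) :
    ((M * A).trace).re ≤ lam * (M.trace).re := by
  have h0 := psd_trace_mul_nonneg hM h
  have hexp : (M * ((lam : ℂ) • 1 - A)).trace = (lam : ℂ) * M.trace - (M * A).trace := by
    rw [Matrix.mul_sub, Matrix.trace_sub, Matrix.mul_smul, mul_one, Matrix.trace_smul,
      smul_eq_mul]
  rw [hexp] at h0
  have := (Complex.le_def.mp h0).1
  simp only [Complex.zero_re, Complex.sub_re, Complex.re_ofReal_mul] at this
  linarith

end Aux

/-- For a compound GU ensemble `(1/(mn), g ρ_k g†)` generated by an irreducible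
representation of `G` (|G| = n) on `ℂ^d` with generators `ρ_1, …, ρ_m`, the optimal
discrimination success probability is `(d/(mn)) · max_k λ_max(ρ_k)`. -/
theorem optSucc_CGU_irreducible
    {G : Type*} [Group G] [Fintype G] (d : ℕ) (hd : 0 < d)
    (π : G →* Matrix.unitaryGroup (Fin d) ℂ)
    (hirr : ∀ Y : Matrix (Fin d) (Fin d) ℂ,
      (∀ g : G, (π g : Matrix (Fin d) (Fin d) ℂ) * Y = Y * (π g : Matrix (Fin d) (Fin d) ℂ)) →
      ∃ c : ℂ, Y = c • (1 : Matrix (Fin d) (Fin d) ℂ))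
    (m : ℕ) (hm : 0 < m)
    (ρ : Fin m → Matrix (Fin d) (Fin d) ℂ)
    (hρ : ∀ k, (ρ k).PosSemidef) (hρtr : ∀ k, (ρ k).trace = 1) :
    optSucc (fun _ : G × Fin m => 1 / ((m : ℝ) * (Fintype.card G : ℝ)))
        (fun gk => (π gk.1 : Matrix (Fin d) (Fin d) ℂ) * ρ gk.2 *
          star (π gk.1 : Matrix (Fin d) (Fin d) ℂ))
      = ((d : ℝ) / ((m : ℝ) * (Fintype.card G : ℝ))) *
          ⨆ k : Fin m, ⨆ i, (hρ k).1.eigenvalues i := by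
  classical
  have hnG : (0:ℕ) < Fintype.card G := Fintype.card_pos
  have hdR : (0:ℝ) < (d:ℝ) := by exact_mod_cast hd
  have hnR : (0:ℝ) < (Fintype.card G : ℝ) := by exact_mod_cast hnG
  have hmR : (0:ℝ) < (m:ℝ) := by exact_mod_cast hm
  haveI : Nonempty (Fin m) := ⟨⟨0, hm⟩⟩
  haveI : Nonempty (Fin d) := ⟨⟨0, hd⟩⟩
  set N : ℝ := (m : ℝ) * (Fintype.card G : ℝ) with hN
  have hNpos : (0:ℝ) < N := mul_pos hmR hnR
  set lam : ℝ := ⨆ k : Fin m, ⨆ i, (hρ k).1.eigenvalues i with hlamdef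
  -- eigenvalue bounds
  have hle : ∀ (k : Fin m) (i : Fin d), (hρ k).1.eigenvalues i ≤ lam := by
    intro k i
    have h1 : (hρ k).1.eigenvalues i ≤ ⨆ j, (hρ k).1.eigenvalues j :=
      le_ciSup (Set.Finite.bddAbove (Set.finite_range _)) i
    have h2 : (⨆ j, (hρ k).1.eigenvalues j) ≤ lam :=
      le_ciSup (f := fun k : Fin m => ⨆ j, (hρ k).1.eigenvalues j)
        (Set.Finite.bddAbove (Set.finite_range _)) k
    exact le_trans h1 h2
  obtain ⟨k0, hk0⟩ := exists_eq_ciSup_of_finite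
    (f := fun k : Fin m => ⨆ i, (hρ k).1.eigenvalues i)
  obtain ⟨i0, hi0⟩ := exists_eq_ciSup_of_finite (f := fun i => (hρ k0).1.eigenvalues i)
  have heig : (hρ k0).1.eigenvalues i0 = lam := by rw [hi0, hk0]
  -- top eigenvector
  set v : Fin d → ℂ := ⇑((hρ k0).1.eigenvectorBasis i0) with hvdef
  have hv1 : star v ⬝ᵥ v = 1 := by
    have h1 := ((hρ k0).1.eigenvectorBasis.orthonormal).1 i0
    have h2 : (inner ℂ ((hρ k0).1.eigenvectorBasis i0) ((hρ k0).1.eigenvectorBasis i0) : ℂ) = 1 := by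
      rw [inner_self_eq_norm_sq_to_K, h1]
      norm_num
    rw [EuclideanSpace.inner_eq_star_dotProduct] at h2
    rw [dotProduct_comm]
    exact h2
  have hvρ : ρ k0 *ᵥ v = lam • v := by
    rw [hvdef, (hρ k0).1.mulVec_eigenvectorBasis, heig]
  set P : Matrix (Fin d) (Fin d) ℂ := Matrix.vecMulVec v (star v) with hPdef
  have hPpsd : P.PosSemidef := vecMulVec_posSemidef v
  have hPtr : ∀ B, (P * B).trace = star v ⬝ᵥ (B *ᵥ v) :=
    fun B => vecMulVec_mul_trace v (star v) B
  have hPρ : (P * ρ k0).trace = (lam : ℂ) := by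
    rw [hPtr, hvρ, dotProduct_smul, hv1]
    simp [Complex.real_smul]
  have htrP : P.trace = 1 := by
    have h := hPtr 1
    rw [mul_one, Matrix.one_mulVec, hv1] at h
    exact h
  -- unitarity
  have hstar_mul : ∀ g : G,
      star (π g : Matrix (Fin d) (Fin d) ℂ) * (π g : Matrix (Fin d) (Fin d) ℂ) = 1 :=
    fun g => (π g).2.1
  have hmul_star : ∀ g : G,
      (π g : Matrix (Fin d) (Fin d) ℂ) * star (π g : Matrix (Fin d) (Fin d) ℂ) = 1 :=
    fun g => (π g).2.2
  -- group average of P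
  set S : Matrix (Fin d) (Fin d) ℂ :=
    ∑ g : G, (π g : Matrix (Fin d) (Fin d) ℂ) * P * star (π g : Matrix (Fin d) (Fin d) ℂ)
    with hSdef
  have hScomm : ∀ h : G,
      (π h : Matrix (Fin d) (Fin d) ℂ) * S = S * (π h : Matrix (Fin d) (Fin d) ℂ) := by
    intro h
    rw [hSdef, Finset.mul_sum, Finset.sum_mul]
    refine (Fintype.sum_equiv (Equiv.mulLeft h).symm _ _ fun g => ?_).symm
    have hg : (π ((Equiv.mulLeft h).symm g) : Matrix (Fin d) (Fin d) ℂ)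
        = star (π h : Matrix (Fin d) (Fin d) ℂ) * (π g : Matrix (Fin d) (Fin d) ℂ) := by
      have h1 : π ((Equiv.mulLeft h).symm g) = (π h)⁻¹ * π g := by
        simp [_root_.map_mul]
      rw [h1]
      rfl
    rw [hg]
    simp only [Matrix.star_mul, star_star, mul_assoc]
    rw [← mul_assoc (π h : Matrix (Fin d) (Fin d) ℂ) (star (π h : Matrix (Fin d) (Fin d) ℂ)),
      hmul_star h, one_mul]
  have hStr : S.trace = (Fintype.card G : ℂ) := by
    rw [hSdef, Matrix.trace_sum]
    have h1 : ∀ g : G,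
        ((π g : Matrix (Fin d) (Fin d) ℂ) * P * star (π g : Matrix (Fin d) (Fin d) ℂ)).trace
          = 1 := by
      intro g
      rw [Matrix.trace_mul_cycle, hstar_mul g, one_mul, htrP]
    simp [h1]
  obtain ⟨c, hc⟩ := hirr S hScomm
  have hcval : c = (Fintype.card G : ℂ) / (d : ℂ) := by
    have hd0 : (d:ℂ) ≠ 0 := by exact_mod_cast hd.ne'
    have h1 : S.trace = c * (d : ℂ) := by
      rw [hc, Matrix.trace_smul, Matrix.trace_one, smul_eq_mul]
      norm_num
    rw [hStr] at h1
    rw [eq_div_iff hd0]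
    exact h1.symm
  have hSval : S = ((Fintype.card G : ℂ) / (d : ℂ)) • 1 := by rw [hc, hcval]
  -- the optimal POVM
  set MM : G × Fin m → Matrix (Fin d) (Fin d) ℂ :=
    fun gk => if gk.2 = k0 then
        (((d : ℝ) / (Fintype.card G : ℝ) : ℝ) : ℂ) •
          ((π gk.1 : Matrix (Fin d) (Fin d) ℂ) * P * star (π gk.1 : Matrix (Fin d) (Fin d) ℂ))
      else 0 with hMM
  have hMMpsd : ∀ gk, (MM gk).PosSemidef := by
    intro gk
    rw [hMM]
    dsimp only
    split
    · refine psd_smul_real (by positivity) ?_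
      have h2 := hPpsd.mul_mul_conjTranspose_same (π gk.1 : Matrix (Fin d) (Fin d) ℂ)
      rwa [← Matrix.star_eq_conjTranspose] at h2
    · exact Matrix.PosSemidef.zero
  have hMMsum : ∑ gk, MM gk = 1 := by
    rw [hMM, Fintype.sum_prod_type]
    simp only [Finset.sum_ite_eq', Finset.mem_univ, if_true]
    rw [← Finset.smul_sum]
    have hS1 : (∑ g : G,
        (π g : Matrix (Fin d) (Fin d) ℂ) * P * star (π g : Matrix (Fin d) (Fin d) ℂ)) = S :=
      hSdef.symm
    rw [hS1, hSval, smul_smul]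
    have : (((d : ℝ) / (Fintype.card G : ℝ) : ℝ) : ℂ) * ((Fintype.card G : ℂ) / (d : ℂ)) = 1 := by
      have hd0 : (d:ℂ) ≠ 0 := by exact_mod_cast hd.ne'
      have hn0 : ((Fintype.card G : ℕ):ℂ) ≠ 0 := by exact_mod_cast hnG.ne'
      push_cast
      field_simp
    rw [this, one_smul]
  have key : ∀ (g : G) (k : Fin m),
      ((MM (g,k)) * ((π g : Matrix (Fin d) (Fin d) ℂ) * ρ k *
        star (π g : Matrix (Fin d) (Fin d) ℂ))).trace
        = if k = k0 then ((((d:ℝ) / (Fintype.card G:ℝ)) * lam : ℝ) : ℂ) else 0 := by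
    intro g k
    rw [hMM]
    dsimp only
    split
    · next hk =>
      subst hk
      rw [Matrix.smul_mul, Matrix.trace_smul]
      have e1 : (π g : Matrix (Fin d) (Fin d) ℂ) * P * star (π g : Matrix (Fin d) (Fin d) ℂ) *
          ((π g : Matrix (Fin d) (Fin d) ℂ) * ρ k * star (π g : Matrix (Fin d) (Fin d) ℂ))
          = (π g : Matrix (Fin d) (Fin d) ℂ) * (P * ρ k) *
            star (π g : Matrix (Fin d) (Fin d) ℂ) := by
        simp only [mul_assoc]
        rw [show star (π g : Matrix (Fin d) (Fin d) ℂ) * ((π g : Matrix (Fin d) (Fin d) ℂ) *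
            (ρ k * star (π g : Matrix (Fin d) (Fin d) ℂ)))
            = ρ k * star (π g : Matrix (Fin d) (Fin d) ℂ) from by
          rw [← mul_assoc, hstar_mul g, one_mul]]
      rw [e1, Matrix.trace_mul_cycle, hstar_mul g, one_mul, hPρ, smul_eq_mul]
      push_cast
      ring
    · rw [Matrix.zero_mul, Matrix.trace_zero]
  have hval : (∑ gk : G × Fin m, (1 / N) *
      (((MM gk) * ((π gk.1 : Matrix (Fin d) (Fin d) ℂ) * ρ gk.2 *
        star (π gk.1 : Matrix (Fin d) (Fin d) ℂ))).trace).re)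
      = (d : ℝ) / N * lam := by
    rw [Fintype.sum_prod_type]
    have h2 : ∀ (g : G) (k : Fin m), (1 / N) *
        (((MM (g,k)) * ((π g : Matrix (Fin d) (Fin d) ℂ) * ρ k *
          star (π g : Matrix (Fin d) (Fin d) ℂ))).trace).re
        = if k = k0 then (1/N) * ((d:ℝ)/(Fintype.card G:ℝ) * lam) else 0 := by
      intro g k
      rw [key g k]
      split
      · rw [Complex.ofReal_re]
      · simp
    simp only [h2, Finset.sum_ite_eq', Finset.mem_univ, if_true, Finset.sum_const,
      Finset.card_univ, nsmul_eq_mul]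
    rw [hN]
    field_simp
  -- conclusion
  unfold optSucc
  refine IsGreatest.csSup_eq ⟨⟨MM, hMMpsd, hMMsum, hval.symm⟩, ?_⟩
  rintro x ⟨M', hpsd, hsum, rfl⟩
  have hsub : ∀ gk : G × Fin m,
      ((lam:ℂ) • 1 - ((π gk.1 : Matrix (Fin d) (Fin d) ℂ) * ρ gk.2 *
        star (π gk.1 : Matrix (Fin d) (Fin d) ℂ))).PosSemidef := by
    intro gk
    have h0 : ((lam:ℂ) • 1 - ρ gk.2).PosSemidef := smul_one_sub_psd (hρ gk.2) (hle gk.2)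
    have h1 := h0.mul_mul_conjTranspose_same (π gk.1 : Matrix (Fin d) (Fin d) ℂ)
    rw [← Matrix.star_eq_conjTranspose] at h1
    have e : (π gk.1 : Matrix (Fin d) (Fin d) ℂ) * ((lam:ℂ) • 1 - ρ gk.2) *
        star (π gk.1 : Matrix (Fin d) (Fin d) ℂ)
        = (lam:ℂ) • 1 - ((π gk.1 : Matrix (Fin d) (Fin d) ℂ) * ρ gk.2 *
          star (π gk.1 : Matrix (Fin d) (Fin d) ℂ)) := by
      rw [Matrix.mul_sub, Matrix.sub_mul, Matrix.mul_smul, mul_one, Matrix.smul_mul,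
        hmul_star gk.1]
    rwa [e] at h1
  calc (∑ i : G × Fin m, (1/N) * ((M' i * ((π i.1 : Matrix (Fin d) (Fin d) ℂ) * ρ i.2 *
          star (π i.1 : Matrix (Fin d) (Fin d) ℂ))).trace).re)
      ≤ ∑ i : G × Fin m, (1/N) * (lam * ((M' i).trace).re) := by
        refine Finset.sum_le_sum fun i _ => ?_
        refine mul_le_mul_of_nonneg_left ?_ (by positivity)
        exact re_trace_mul_le (hpsd i) (hsub i)
    _ = (1/N) * (lam * (((∑ i : G × Fin m, M' i).trace).re)) := by
        rw [Matrix.trace_sum, Complex.re_sum, ← Finset.mul_sum, ← Finset.mul_sum]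
    _ ≤ (d:ℝ)/N * lam := by
        rw [hsum, Matrix.trace_one]
        simp only [Fintype.card_fin, Complex.natCast_re]
        rw [hN]
        apply le_of_eq
        ring
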